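/- arXiv:1507.07053 — 7 statements merged into one kernel-verified Lean document; each statement's English description precedes it below -/
import Mathlib

section
/- Let λ be a partition and n a natural number with n ≥ ℓ(λ). Then the set {m ∈ ℤ : m ≤ n} is the disjoint union of the two sets {λ'_i − i + 1 : i ∈ ℕ, i ≥ 1} and {i − λ_i : i ∈ ℕ, 1 ≤ i ≤ n}; moreover the map i ↦ λ'_i − i + 1 on {i ≥ 1} is strictly decreasing (hence injective) and the map i ↦ i − λ_i on {1,…,n} is strictly increasing (hence injective). -/
/-- A partition is encoded as `f : ℕ → ℕ` with `f i = λ_{i+1}` (so the index is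
0-based), required to be antitone; finiteness of the support follows from the
hypothesis `hn` below.  The conjugate partition is
`λ'_{i+1} = #{j ≥ 1 : λ_j ≥ i+1} = Set.ncard {j : ℕ | i + 1 ≤ f j}`.

The map `i ↦ λ'_i − i + 1` (for 1-based `i ≥ 1`) becomes
`c : ℕ → ℤ, c i = λ'_{i+1} − (i+1) + 1 = ncard {j | i+1 ≤ f j} − i`, and the map
`i ↦ i − λ_i` on `{1,…,n}` becomes `b : ℕ → ℤ, b i = (i+1) − f i` on `Set.Iio n`.

STATEMENT 0: `{m : ℤ | m ≤ n}` is the disjoint union of the range of `c` and the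
image of `Set.Iio n` under `b`; moreover `c` is strictly decreasing and `b` is
strictly increasing on `Set.Iio n`. -/
theorem closed_topological_vertex_index_partition
    (f : ℕ → ℕ) (hf : Antitone f) (n : ℕ) (hn : ∀ i, n ≤ i → f i = 0) :
    (Set.range (fun i : ℕ => (Set.ncard {j : ℕ | i + 1 ≤ f j} : ℤ) - i) ∪
        (fun i : ℕ => ((i : ℤ) + 1) - (f i : ℤ)) '' (Set.Iio n) = {m : ℤ | m ≤ (n : ℤ)}) ∧
    (Set.range (fun i : ℕ => (Set.ncard {j : ℕ | i + 1 ≤ f j} : ℤ) - i) ∩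
        (fun i : ℕ => ((i : ℤ) + 1) - (f i : ℤ)) '' (Set.Iio n) = ∅) ∧
    StrictAnti (fun i : ℕ => (Set.ncard {j : ℕ | i + 1 ≤ f j} : ℤ) - i) ∧
    StrictMonoOn (fun i : ℕ => ((i : ℤ) + 1) - (f i : ℤ)) (Set.Iio n) := by
  set g : ℕ → ℕ := fun i => Set.ncard {j : ℕ | i + 1 ≤ f j} with hg
  have hIio : ∀ k : ℕ, (Set.Iio k).ncard = k := by
    intro k
    rw [← Finset.coe_Iio, Set.ncard_coe_finset, Nat.card_Iio]
  have hIic : ∀ k : ℕ, (Set.Iic k).ncard = k + 1 := by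
    intro k
    rw [← Finset.coe_Iic, Set.ncard_coe_finset, Nat.card_Iic]
  have hsub : ∀ i, {j : ℕ | i + 1 ≤ f j} ⊆ Set.Iio n := by
    intro i j hj
    simp only [Set.mem_setOf_eq] at hj
    by_contra h
    simp only [Set.mem_Iio, not_lt] at h
    rw [hn j h] at hj
    omega
  have hfin : ∀ i, {j : ℕ | i + 1 ≤ f j}.Finite :=
    fun i => (Set.finite_Iio n).subset (hsub i)
  have hgle : ∀ i, g i ≤ n := by
    intro i
    have h1 := Set.ncard_le_ncard (hsub i) (Set.finite_Iio n)
    rw [hIio] at h1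
    have h2 : Set.ncard {j : ℕ | i + 1 ≤ f j} = g i := rfl
    omega
  have dual : ∀ i j, i < f j ↔ j < g i := by
    intro i j
    constructor
    · intro h
      have hsub2 : Set.Iic j ⊆ {k : ℕ | i + 1 ≤ f k} := by
        intro k hk
        simp only [Set.mem_Iic] at hk
        exact le_trans h (hf hk)
      have := Set.ncard_le_ncard hsub2 (hfin i)
      rw [hIic] at this
      have h2 : Set.ncard {k : ℕ | i + 1 ≤ f k} = g i := rfl
      omega
    · intro h
      by_contra hcon
      push_neg at hcon
      have hsub2 : {k : ℕ | i + 1 ≤ f k} ⊆ Set.Iio j := by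
        intro k hk
        simp only [Set.mem_setOf_eq] at hk
        simp only [Set.mem_Iio]
        by_contra hk2
        push_neg at hk2
        have := hf hk2
        omega
      have := Set.ncard_le_ncard hsub2 (Set.finite_Iio j)
      rw [hIio] at this
      have h2 : Set.ncard {k : ℕ | i + 1 ≤ f k} = g i := rfl
      omega
  refine ⟨?_, ?_, ?_, ?_⟩
  · ext m
    simp only [Set.mem_union, Set.mem_range, Set.mem_image, Set.mem_Iio, Set.mem_setOf_eq]
    constructor
    · rintro (⟨i, rfl⟩ | ⟨j, hj, rfl⟩)
      · have := hgle i
        have h2 : Set.ncard {j : ℕ | i + 1 ≤ f j} = g i := rfl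
        omega
      · omega
    · intro hm
      by_cases hc : ∃ i : ℕ, (g i : ℤ) - i = m
      · exact Or.inl hc
      · right
        push_neg at hc
        have hex : ∃ i : ℕ, (g i : ℤ) - i < m := by
          refine ⟨(n + 1 - m).toNat, ?_⟩
          have h1 : ((n + 1 - m).toNat : ℤ) = n + 1 - m := Int.toNat_of_nonneg (by omega)
          have := hgle (n + 1 - m).toNat
          omega
        set N := Nat.find hex with hNdef
        have hN : (g N : ℤ) - N < m := Nat.find_spec hex
        have hjnn : (0 : ℤ) ≤ m + N - 1 := by omega
        set j := (m + (N : ℤ) - 1).toNat with hjdef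
        have hjZ : (j : ℤ) = m + N - 1 := Int.toNat_of_nonneg hjnn
        have hfj1 : f j ≤ N := by
          by_contra h
          push_neg at h
          have := (dual N j).mp h
          omega
        have hfj2 : N ≤ f j := by
          rcases Nat.eq_zero_or_pos N with h0 | h0
          · omega
          · have hmin : ¬ ((g (N - 1) : ℤ) - (N - 1 : ℕ) < m) := Nat.find_min hex (by omega)
            push_neg at hmin
            have hne := hc (N - 1)
            have hlt : (j : ℤ) < g (N - 1) := by
              have : ((N - 1 : ℕ) : ℤ) = (N : ℤ) - 1 := by omega
              omega
            have := (dual (N - 1) j).mpr (by exact_mod_cast by omega)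
            omega
        have hfj : f j = N := le_antisymm hfj1 hfj2
        have hjn : j < n := by
          rcases Nat.eq_zero_or_pos N with h0 | h0
          · omega
          · by_contra h
            push_neg at h
            have := hn j h
            omega
        exact ⟨j, hjn, by rw [hfj]; omega⟩
  · ext m
    simp only [Set.mem_inter_iff, Set.mem_range, Set.mem_image, Set.mem_Iio, Set.mem_empty_iff_false,
      iff_false, not_and]
    rintro ⟨i, hi⟩ ⟨j, hj, hjm⟩
    rw [← hi] at hjm
    have h2 : Set.ncard {j : ℕ | i + 1 ≤ f j} = g i := rfl
    by_cases h : j < g i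
    · have := (dual i j).mpr h
      omega
    · push_neg at h
      have : ¬ (i < f j) := fun hcon => absurd ((dual i j).mp hcon) (by omega)
      omega
  · intro i i' hii'
    simp only
    have hmono : g i' ≤ g i := by
      apply Set.ncard_le_ncard _ (hfin i)
      intro k hk
      simp only [Set.mem_setOf_eq] at hk ⊢
      omega
    have h2 : Set.ncard {j : ℕ | i + 1 ≤ f j} = g i := rfl
    have h3 : Set.ncard {j : ℕ | i' + 1 ≤ f j} = g i' := rfl
    omega
  · intro i _ i' _ hii'
    simp only
    have := hf hii'.le
    omega
end

section
/- Let q ∈ ℂ with 0 < |q| < 1, let k be a positive integer, let λ be a partition, and let n be a natural number with n ≥ ℓ(λ). Then the family (q^{-k(λ'_i − i + 1)})_{i≥1} is summable, and ∑_{i=1}^∞ q^{-k(λ'_i − i + 1)} + ∑_{i=1}^n q^{k(λ_i − i)} = q^{-kn}/(1 − q^k). -/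
/-!
Write `t = q ^ k`. Removing the first column of `λ` (lowering every nonzero part by one) turns
`λ'_{i+1}` into `λ'_i`, so the conjugate series becomes `t ^ (-λ'_1)` plus `t` times the series
of the smaller partition, while the row sum changes by the telescoping geometric sum
`∑_{λ'_1 ≤ i < n} (1 - t) t ^ (-(i+1)) = t ^ (-n) - t ^ (-λ'_1)`. Induction on `λ_1` reduces
everything to the empty partition, where the conjugate series is the geometric series.
-/

open Finset

-- With `f i = λ_{i+1}` this is `λ'_{i+1}`: indices are shifted to start at `0`.
noncomputable def conjugate (f : ℕ → ℕ) (i : ℕ) : ℕ := {j : ℕ | i + 1 ≤ f j}.ncard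

theorem Antitone.setOf_le_eq_Iio_ncard {f : ℕ → ℕ} (hf : Antitone f) {c n : ℕ} (hn : f n < c) :
    {j | c ≤ f j} = Set.Iio {j | c ≤ f j}.ncard := by
  have hlower : IsLowerSet {j | c ≤ f j} := fun _ _ hba ha => le_trans ha (hf hba)
  obtain huniv | ⟨a, ha⟩ := hlower.eq_univ_or_Iio
  · exact absurd (huniv ▸ Set.mem_univ n : n ∈ {j | c ≤ f j}) hn.not_ge
  · rw [ha, Set.ncard_Iio_nat]

theorem pos_iff_lt_conjugate_zero {f : ℕ → ℕ} (hf : Antitone f) {n : ℕ} (hn : f n = 0) (i : ℕ) :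
    0 < f i ↔ i < conjugate f 0 := by
  have := hf.setOf_le_eq_Iio_ncard (c := 1) (hn ▸ zero_lt_one)
  simpa [conjugate, Nat.pos_iff_ne_zero, Nat.one_le_iff_ne_zero] using Set.ext_iff.mp this i

theorem conjugate_sub_one (f : ℕ → ℕ) (i : ℕ) :
    conjugate (fun j => f j - 1) i = conjugate f (i + 1) := by
  unfold conjugate
  congr 1
  ext j
  simp only [Set.mem_ofPred_eq]
  omega

section

variable {K : Type*} [NormedField K] {t : K}

theorem sum_range_zpow_sub_mul_sum_range_zpow_pred (ht : t ≠ 0) {f : ℕ → ℕ} (hf : Antitone f)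
    {n : ℕ} (hn : f n = 0) :
    ∑ i ∈ range n, t ^ ((f i : ℤ) - (i + 1))
        - t * ∑ i ∈ range n, t ^ (((f i - 1 : ℕ) : ℤ) - (i + 1))
      = t ^ (-(n : ℤ)) - t ^ (-(conjugate f 0 : ℤ)) := by
  set m := conjugate f 0
  have hm := pos_iff_lt_conjugate_zero hf hn
  have hmn : m ≤ n := not_lt.mp fun h => by simpa [hn] using (hm n).mpr h
  -- each difference of terms is a step of the telescoping sequence `t ^ (-max i m)`
  have hstep : ∀ i, t ^ ((f i : ℤ) - (i + 1)) - t * t ^ (((f i - 1 : ℕ) : ℤ) - (i + 1))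
      = t ^ (-(max (i + 1) m : ℕ) : ℤ) - t ^ (-(max i m : ℕ) : ℤ) := by
    intro i
    rcases lt_or_ge i m with him | hmi
    · have hfi : ((f i - 1 : ℕ) : ℤ) = f i - 1 := by have := (hm i).mpr him; omega
      rw [max_eq_right (by omega : i + 1 ≤ m), max_eq_right him.le, sub_self, hfi,
        ← zpow_one_add₀ ht]
      ring_nf
    · have hfi : f i = 0 := Nat.eq_zero_of_not_pos fun h => absurd ((hm i).mp h) (by omega)
      rw [max_eq_left (by omega : m ≤ i + 1), max_eq_left hmi, hfi, ← zpow_one_add₀ ht]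
      push_cast
      ring_nf
  rw [mul_sum, ← sum_sub_distrib, sum_congr rfl fun i _ => hstep i,
    sum_range_sub (fun i => t ^ (-(max i m : ℕ) : ℤ)), max_eq_left hmn, Nat.zero_max]

theorem hasSum_zpow_sub_conjugate (ht0 : t ≠ 0) (ht1 : ‖t‖ < 1) {f : ℕ → ℕ} (hf : Antitone f)
    {n : ℕ} (hn : f n = 0) :
    HasSum (fun i : ℕ => t ^ ((i : ℤ) - conjugate f i))
      (t ^ (-(n : ℤ)) / (1 - t) - ∑ i ∈ range n, t ^ ((f i : ℤ) - (i + 1))) := by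
  have hne : 1 - t ≠ 0 := sub_ne_zero.mpr fun h => by simp [← h] at ht1
  induction hN : f 0 generalizing f with
  | zero =>
    have hrows := sum_range_zpow_sub_mul_sum_range_zpow_pred ht0 hf hn
    have hzero : ∀ i, f i = 0 := fun i => Nat.eq_zero_of_le_zero (hN ▸ hf (Nat.zero_le i))
    have hconj : ∀ i, conjugate f i = 0 := by simp [conjugate, hzero]
    simp only [hzero, hconj, Nat.zero_sub, Nat.cast_zero, sub_zero, zpow_natCast,
      neg_zero, zpow_zero] at hrows ⊢
    convert hasSum_geometric_of_norm_lt_one ht1 using 1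
    field_simp
    linear_combination -hrows
  | succ N ih =>
    have hrows := sum_range_zpow_sub_mul_sum_range_zpow_pred ht0 hf hn
    have hg := ih (fun a b hab => Nat.sub_le_sub_right (hf hab) 1) (by simp [hn]) (by simp [hN])
    have hterm : ∀ i : ℕ, t * t ^ ((i : ℤ) - conjugate (fun j => f j - 1) i)
        = t ^ (((i + 1 : ℕ) : ℤ) - conjugate f (i + 1)) := fun i => by
      rw [conjugate_sub_one, ← zpow_one_add₀ ht0]
      push_cast
      ring_nf
    have hshift := (hg.mul_left t).congr_fun fun i => (hterm i).symm
    have hsum := (hasSum_nat_add_iff (f := fun i : ℕ => t ^ ((i : ℤ) - conjugate f i)) 1).mp hshift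
    rw [range_one, sum_singleton, Nat.cast_zero, zero_sub] at hsum
    have hval : t ^ (-(n : ℤ)) / (1 - t) - ∑ i ∈ range n, t ^ ((f i : ℤ) - (i + 1))
        = t * (t ^ (-(n : ℤ)) / (1 - t) - ∑ i ∈ range n, t ^ (((f i - 1 : ℕ) : ℤ) - (i + 1)))
          + t ^ (-(conjugate f 0 : ℤ)) := by
      linear_combination div_mul_cancel₀ (t ^ (-(n : ℤ))) hne - hrows
    rw [hval]
    exact hsum
end

/-- A partition is encoded as `f : ℕ → ℕ` with `f i = λ_{i+1}` (0-based index),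
required to be antitone; `hn : ∀ i, n ≤ i → f i = 0` says `n ≥ ℓ(λ)`.
The conjugate partition is `λ'_{i+1} = Set.ncard {j : ℕ | i + 1 ≤ f j}`.

STATEMENT 1: for `0 < |q| < 1` and `k ≥ 1`, the family
`(q^{-k(λ'_i − i + 1)})_{i ≥ 1}`, i.e.
`fun i : ℕ => q ^ (-(k:ℤ) * ((λ'_{i+1} : ℤ) - i))`, is summable, and
`∑_{i=1}^∞ q^{-k(λ'_i − i + 1)} + ∑_{i=1}^n q^{k(λ_i − i)} = q^{-kn}/(1 − q^k)`. -/
theorem closed_topological_vertex_conjugate_partition_sum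
    (q : ℂ) (hq0 : 0 < ‖q‖) (hq1 : ‖q‖ < 1)
    (k : ℕ) (hk : 0 < k)
    (f : ℕ → ℕ) (hf : Antitone f) (n : ℕ) (hn : ∀ i, n ≤ i → f i = 0) :
    Summable (fun i : ℕ =>
      q ^ (-(k : ℤ) * ((Set.ncard {j : ℕ | i + 1 ≤ f j} : ℤ) - i))) ∧
    (∑' i : ℕ, q ^ (-(k : ℤ) * ((Set.ncard {j : ℕ | i + 1 ≤ f j} : ℤ) - i))) +
        (∑ i ∈ Finset.range n, q ^ ((k : ℤ) * ((f i : ℤ) - ((i : ℤ) + 1)))) =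
      q ^ (-(k : ℤ) * n) / (1 - q ^ k) := by
  have ht0 : q ^ k ≠ 0 := pow_ne_zero k (norm_pos_iff.mp hq0)
  have ht1 : ‖q ^ k‖ < 1 := by rw [norm_pow]; exact pow_lt_one₀ (norm_nonneg q) hq1 hk.ne'
  have hpow : ∀ x : ℤ, q ^ ((k : ℤ) * x) = (q ^ k) ^ x := fun x => by rw [zpow_mul, zpow_natCast]
  have hsum := hasSum_zpow_sub_conjugate ht0 ht1 hf (hn n le_rfl)
  simp only [neg_mul, ← mul_neg, neg_sub, hpow]
  exact ⟨hsum.summable, eq_sub_iff_add_eq.mp hsum.tsum_eq⟩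
end

section
/- Let q ∈ ℂ with 0 < |q| < 1, let k be a positive integer, and let λ be a partition. Then ∑_{i=1}^∞ (q^{k(λ_i − i + 1)} − q^{k(1 − i)}) = q^k/(1 − q^k) − q^k · ∑_{i=1}^∞ q^{-k(λ'_i − i + 1)}, where the sum on the left has only finitely many nonzero terms (the summand vanishes for i > ℓ(λ)) and the series on the right is summable. -/
/-! Put `x = q ^ k` and give the cell `(r, c)` (0-indexed row and column) of the Young diagram
of `λ` the weight `x ^ (c - r + 1) - x ^ (c - r)`. Along row `r` these weights telescope to
`x ^ (λ_{r+1} - r) - x ^ (-r)`, down column `c` to `x ^ (c + 1) - x ^ (c + 1 - λ'_{c+1})`.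
So the left side is `∑_c (x ^ (c + 1) - x ^ (c + 1 - λ'_{c+1}))`, whose terms vanish for
`c ≥ λ_1`; splitting it into two convergent series gives `x / (1 - x) - x ∑_c x ^ (c - λ'_{c+1})`. -/

open Finset

-- `conjPartition f i = λ'_{i+1}` under the encoding `f i = λ_{i+1}`.
noncomputable def conjPartition (f : ℕ → ℕ) (i : ℕ) : ℕ := Set.ncard {j | i + 1 ≤ f j}

section Partition

variable {f : ℕ → ℕ} {N : ℕ}

theorem setOf_add_one_le_eq_Iio_conjPartition (hf : Antitone f) (hN : f N = 0) (i : ℕ) :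
    {j | i + 1 ≤ f j} = Set.Iio (conjPartition f i) := by
  have hlower : IsLowerSet {j | i + 1 ≤ f j} := fun _ _ hle hb => le_trans hb (hf hle)
  obtain hS | ⟨a, hS⟩ := hlower.eq_univ_or_Iio
  · exact absurd (hS ▸ Set.mem_univ N : N ∈ {j | i + 1 ≤ f j}) (by simp [hN])
  · rw [conjPartition, hS, ← Finset.coe_range, Set.ncard_coe_finset, card_range, coe_range]

theorem lt_conjPartition_iff (hf : Antitone f) (hN : f N = 0) {i j : ℕ} :
    j < conjPartition f i ↔ i < f j := by
  rw [← Set.mem_Iio, ← setOf_add_one_le_eq_Iio_conjPartition hf hN, Set.mem_ofPred_eq,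
    Nat.succ_le_iff]

theorem conjPartition_eq_zero_of_le (hf : Antitone f) {i : ℕ} (hi : f 0 ≤ i) :
    conjPartition f i = 0 := by
  have hempty : {j | i + 1 ≤ f j} = ∅ :=
    Set.eq_empty_of_forall_notMem fun j hj => by
      have := hf (Nat.zero_le j); simp only [Set.mem_ofPred_eq] at hj; omega
  rw [conjPartition, hempty, Set.ncard_empty]

theorem sum_range_sum_range_comm_conjPartition {M : Type*} [AddCommMonoid M]
    (hf : Antitone f) (hN : f N = 0) (h : ℕ → ℕ → M) :
    ∑ i ∈ range N, ∑ c ∈ range (f i), h i c =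
      ∑ c ∈ range (f 0), ∑ i ∈ range (conjPartition f c), h i c := by
  refine sum_comm' fun i c => ?_
  simp only [mem_range, lt_conjPartition_iff hf hN]
  constructor
  · rintro ⟨-, hc⟩
    exact ⟨hc, hc.trans_le (hf (Nat.zero_le i))⟩
  · rintro ⟨hc, -⟩
    refine ⟨lt_of_not_ge fun hi => ?_, hc⟩
    have := hf hi
    omega

theorem row_content_sub_eq_zero_of_le {G : Type*} [AddCommGroup G] (hf : Antitone f)
    (hN : f N = 0) (w : ℤ → G) {i : ℕ} (hi : N ≤ i) : w ((f i : ℤ) - i) - w (-(i : ℤ)) = 0 := by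
  have hfi : f i = 0 := Nat.eq_zero_of_le_zero (hN ▸ hf hi)
  rw [hfi, Nat.cast_zero, zero_sub, sub_self]

theorem sum_content_rows_eq_sum_content_columns {G : Type*} [AddCommGroup G]
    (hf : Antitone f) (hN : f N = 0) (w : ℤ → G) :
    ∑ i ∈ range N, (w ((f i : ℤ) - i) - w (-(i : ℤ))) =
      ∑ c ∈ range (f 0), (w ((c : ℤ) + 1) - w ((c : ℤ) + 1 - conjPartition f c)) := by
  have hrow : ∀ i : ℕ, w ((f i : ℤ) - i) - w (-(i : ℤ)) =
      ∑ c ∈ range (f i), (w ((c : ℤ) + 1 - i) - w ((c : ℤ) - i)) := by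
    intro i
    have h := sum_range_sub (fun c : ℕ => w ((c : ℤ) - i)) (f i)
    simp only [Nat.cast_add, Nat.cast_one, Nat.cast_zero, zero_sub] at h
    exact h.symm
  have hcol : ∀ c : ℕ, w ((c : ℤ) + 1) - w ((c : ℤ) + 1 - conjPartition f c) =
      ∑ i ∈ range (conjPartition f c), (w ((c : ℤ) + 1 - i) - w ((c : ℤ) - i)) := by
    intro c
    have h := sum_range_sub' (fun i : ℕ => w ((c : ℤ) + 1 - i)) (conjPartition f c)
    simp only [Nat.cast_add, Nat.cast_one, Nat.cast_zero, sub_zero, add_sub_add_right_eq_sub] at h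
    exact h.symm
  simp only [hrow, hcol]
  exact sum_range_sum_range_comm_conjPartition hf hN _

end Partition

section Eigenvalue

variable {𝕜 : Type*} [NormedField 𝕜] {x : 𝕜} {f : ℕ → ℕ} {N : ℕ}

theorem summable_zpow_sub_conjPartition (hx : ‖x‖ < 1) (hf : Antitone f) :
    Summable fun i : ℕ => x ^ ((i : ℤ) - conjPartition f i) := by
  refine (summable_geometric_of_norm_lt_one hx).congr_atTop ?_
  filter_upwards [Filter.eventually_ge_atTop (f 0)] with i hi
  rw [conjPartition_eq_zero_of_le hf hi, Nat.cast_zero, sub_zero, zpow_natCast]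

theorem tsum_zpow_sub_zpow_neg_eq (hx0 : x ≠ 0) (hx : ‖x‖ < 1) (hf : Antitone f) (hN : f N = 0) :
    ∑' i : ℕ, (x ^ ((f i : ℤ) - i) - x ^ (-(i : ℤ))) =
      x / (1 - x) - x * ∑' i : ℕ, x ^ ((i : ℤ) - conjPartition f i) := by
  have hrows : ∀ i ∉ range N, x ^ ((f i : ℤ) - i) - x ^ (-(i : ℤ)) = 0 :=
    fun i hi => row_content_sub_eq_zero_of_le hf hN (x ^ ·) (not_lt.mp (mem_range.not.mp hi))
  have hcols : ∀ c ∉ range (f 0),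
      x ^ ((c : ℤ) + 1) - x ^ ((c : ℤ) + 1 - conjPartition f c) = 0 := by
    intro c hc
    rw [conjPartition_eq_zero_of_le hf (not_lt.mp (mem_range.not.mp hc)), Nat.cast_zero, sub_zero,
      sub_self]
  have hshift : ∀ n : ℤ, x ^ (n + 1) = x * x ^ n := fun n => by
    rw [zpow_add_one₀ hx0, mul_comm]
  calc ∑' i : ℕ, (x ^ ((f i : ℤ) - i) - x ^ (-(i : ℤ)))
      = ∑' c : ℕ, (x ^ ((c : ℤ) + 1) - x ^ ((c : ℤ) + 1 - conjPartition f c)) := by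
        rw [tsum_eq_sum hrows, tsum_eq_sum hcols,
          sum_content_rows_eq_sum_content_columns hf hN (x ^ ·)]
    _ = ∑' c : ℕ, (x * x ^ c - x * x ^ ((c : ℤ) - conjPartition f c)) := by
        simp only [add_sub_right_comm, hshift, zpow_natCast]
    _ = x / (1 - x) - x * ∑' i : ℕ, x ^ ((i : ℤ) - conjPartition f i) := by
        rw [Summable.tsum_sub ((summable_geometric_of_norm_lt_one hx).mul_left x)
            ((summable_zpow_sub_conjPartition hx hf).mul_left x), tsum_mul_left, tsum_mul_left,
          tsum_geometric_of_norm_lt_one hx, div_eq_mul_inv]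

end Eigenvalue

/-- A partition is encoded as `f : ℕ → ℕ` with `f i = λ_{i+1}` (0-based index),
antitone with finite support.  The conjugate partition is
`λ'_{i+1} = Set.ncard {j : ℕ | i + 1 ≤ f j}`.

STATEMENT 2: for `0 < |q| < 1` and `k ≥ 1`,
`∑_{i=1}^∞ (q^{k(λ_i − i + 1)} − q^{k(1 − i)})
   = q^k/(1 − q^k) − q^k ∑_{i=1}^∞ q^{-k(λ'_i − i + 1)}`,
where the left-hand summand (0-indexed: `q^{k(f i − i)} − q^{-k i}`) is nonzero
for only finitely many `i`, and the right-hand family is summable. -/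
theorem closed_topological_vertex_Vk0_eigenvalue
    (q : ℂ) (hq0 : 0 < ‖q‖) (hq1 : ‖q‖ < 1)
    (k : ℕ) (hk : 0 < k)
    (f : ℕ → ℕ) (hf : Antitone f) (hfin : ∃ N, ∀ i, N ≤ i → f i = 0) :
    {i : ℕ | q ^ ((k : ℤ) * ((f i : ℤ) - i)) - q ^ (-(k : ℤ) * i) ≠ 0}.Finite ∧
    Summable (fun i : ℕ =>
      q ^ (-(k : ℤ) * ((Set.ncard {j : ℕ | i + 1 ≤ f j} : ℤ) - i))) ∧
    (∑' i : ℕ, (q ^ ((k : ℤ) * ((f i : ℤ) - i)) - q ^ (-(k : ℤ) * i))) =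
      q ^ k / (1 - q ^ k) -
        q ^ k * ∑' i : ℕ, q ^ (-(k : ℤ) * ((Set.ncard {j : ℕ | i + 1 ≤ f j} : ℤ) - i)) := by
  obtain ⟨N, hN⟩ := hfin
  have hN0 : f N = 0 := hN N le_rfl
  have hx0 : q ^ k ≠ 0 := pow_ne_zero k (norm_pos_iff.mp hq0)
  have hx1 : ‖q ^ k‖ < 1 := by
    rw [norm_pow]
    exact pow_lt_one₀ (norm_nonneg q) hq1 hk.ne'
  have hpow : ∀ n : ℤ, q ^ ((k : ℤ) * n) = (q ^ k) ^ n := fun n => by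
    rw [zpow_mul, zpow_natCast]
  simp only [neg_mul, ← mul_neg, neg_sub, hpow]
  refine ⟨(range N).finite_toSet.subset fun i hi => ?_,
    summable_zpow_sub_conjPartition hx1 hf, tsum_zpow_sub_zpow_neg_eq hx0 hx1 hf hN0⟩
  exact mem_range.mpr (lt_of_not_ge fun h => hi (row_content_sub_eq_zero_of_le hf hN0 _ h))
end

section
/- Let q, Q ∈ ℂ with 0 < |q| < 1, and let α and β be partitions with |Q| < |q|^{α_1 + β_1}. Then the doubly indexed family (1 − Q q^{-β_i − α_j + i + j − 1})_{i,j ≥ 1} is multipliable and ∏_{i,j=1}^∞ (1 − Q q^{-β_i − α_j + i + j − 1}) = exp( − ∑_{k=1}^∞ (Q^k / k) · ( ∑_{i=1}^∞ q^{k(i − β_i)} ) · ( ∑_{j=1}^∞ q^{k(j − 1 − α_j)} ) ), all the series occurring on the right-hand side being absolutely convergent. -/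
/-!
Write `x_{ij} = Q q^{-β_i-α_j+i+j-1}`. Since `β_i ≤ β_1` and `α_j ≤ α_1`, we have
`|x_{ij}| ≤ c |q|^{i+j-1}` with `c = |Q| / |q|^{α_1+β_1} < 1`, so the family `x` is absolutely
summable and bounded by `c`. Hence the product is the exponential of
`∑_{i,j} log(1 - x_{ij}) = -∑_{i,j} ∑_k x_{ij}^k / k`, and the triple series is absolutely
convergent (its terms are bounded by `|x_{ij}| c^{k-1}`), so it may be summed over `(i, j)` first.
For fixed `k`, `x_{ij}^k = Q^k q^{k(i-β_i)} q^{k(j-1-α_j)}`, so the inner double sum is a product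
of two single sums.
-/

open Complex

section LogSeries

variable {ι : Type*} {f : ι → ℂ}

lemma hasSum_pow_succ_div_neg_log {z : ℂ} (hz : ‖z‖ < 1) :
    HasSum (fun k : ℕ => z ^ (k + 1) / ((k : ℂ) + 1)) (-log (1 - z)) := by
  simpa using (hasSum_nat_add_iff' 1).mpr (hasSum_taylorSeries_neg_log hz)

lemma summable_pow_succ_div {c : ℝ} (hc : c < 1) (hf : ∀ i, ‖f i‖ ≤ c)
    (hsum : Summable fun i => ‖f i‖) :
    Summable fun p : ι × ℕ => f p.1 ^ (p.2 + 1) / ((p.2 : ℂ) + 1) := by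
  obtain ⟨c, hc0, hc1, hf⟩ : ∃ c' : ℝ, 0 ≤ c' ∧ c' < 1 ∧ ∀ i, ‖f i‖ ≤ c' :=
    ⟨max c 0, le_max_right _ _, max_lt hc one_pos, fun i => (hf i).trans (le_max_left _ _)⟩
  refine .of_norm_bounded (hsum.mul_of_nonneg (summable_geometric_of_lt_one hc0 hc1)
    (fun _ => norm_nonneg _) (fun _ => by positivity)) ?_
  rintro ⟨i, k⟩
  have hk : (1 : ℝ) ≤ ‖(k : ℂ) + 1‖ := by
    rw [← Nat.cast_add_one, Complex.norm_natCast]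
    exact_mod_cast Nat.le_add_left 1 k
  calc ‖f i ^ (k + 1) / ((k : ℂ) + 1)‖ ≤ ‖f i‖ ^ (k + 1) := by
        rw [norm_div, norm_pow]
        exact div_le_self (by positivity) hk
    _ = ‖f i‖ * ‖f i‖ ^ k := pow_succ' _ _
    _ ≤ ‖f i‖ * c ^ k := by gcongr; exact hf i

theorem hasProd_one_sub_eq_exp_neg_tsum {c : ℝ} (hc : c < 1) (hf : ∀ i, ‖f i‖ ≤ c)
    (hsum : Summable fun i => ‖f i‖) :
    Summable (fun k : ℕ => ∑' i, f i ^ (k + 1) / ((k : ℂ) + 1)) ∧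
    HasProd (fun i => 1 - f i) (exp (-∑' k : ℕ, ∑' i, f i ^ (k + 1) / ((k : ℂ) + 1))) := by
  have hg := summable_pow_succ_div hc hf hsum
  have hnorm : ∀ i, ‖f i‖ < 1 := fun i => (hf i).trans_lt hc
  have hlog : ∀ i, log (1 - f i) = -∑' k : ℕ, f i ^ (k + 1) / ((k : ℂ) + 1) := fun i => by
    rw [(hasSum_pow_succ_div_neg_log (hnorm i)).tsum_eq, neg_neg]
  have hlogS : Summable fun i => log (1 - f i) := by
    simpa only [hlog] using hg.prod.neg
  have hlogsum : ∑' i, log (1 - f i) = -∑' k : ℕ, ∑' i, f i ^ (k + 1) / ((k : ℂ) + 1) := by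
    rw [tsum_congr hlog, tsum_neg,
      Summable.tsum_comm (f := fun i (k : ℕ) => f i ^ (k + 1) / ((k : ℂ) + 1)) hg]
  refine ⟨hg.prod_symm.prod, ?_⟩
  rw [← hlogsum]
  convert hlogS.hasSum.cexp using 1
  funext i
  have hne : 1 - f i ≠ 0 := sub_ne_zero.mpr fun h => by simpa [← h] using hnorm i
  exact (exp_log hne).symm

end LogSeries

lemma summable_pow_add_add_one {r : ℝ} (h0 : 0 ≤ r) (h1 : r < 1) :
    Summable fun ij : ℕ × ℕ => r ^ (ij.1 + ij.2 + 1) := by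
  have h := summable_geometric_of_lt_one h0 h1
  refine ((h.mul_of_nonneg h (fun _ => by positivity) fun _ => by positivity).mul_left r).congr
    fun ij => ?_
  simp only [pow_succ, pow_add]
  ring

section ZpowSeries

variable {q : ℂ} {α β : ℕ → ℕ}

lemma summable_norm_zpow_of_le (hq : q ≠ 0) (hq1 : ‖q‖ < 1) {e : ℕ → ℤ} (C : ℤ)
    (h : ∀ i : ℕ, (i : ℤ) + C ≤ e i) :
    Summable fun i => ‖q ^ e i‖ := by
  have hq0 : 0 < ‖q‖ := norm_pos_iff.mpr hq
  refine .of_nonneg_of_le (fun _ => norm_nonneg _) (fun i => ?_)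
    ((summable_geometric_of_lt_one hq0.le hq1).mul_left (‖q‖ ^ C))
  calc ‖q ^ e i‖ = ‖q‖ ^ e i := norm_zpow _ _
    _ ≤ ‖q‖ ^ ((i : ℤ) + C) := zpow_le_zpow_right_of_le_one₀ hq0 hq1.le (h i)
    _ = ‖q‖ ^ C * ‖q‖ ^ i := by rw [zpow_add₀ hq0.ne', zpow_natCast, mul_comm]

lemma summable_norm_zpow_mul_sub_of_antitone (hq : q ≠ 0) (hq1 : ‖q‖ < 1) {a : ℕ → ℕ}
    (ha : Antitone a) (k : ℕ) (c : ℤ) :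
    Summable fun i : ℕ => ‖q ^ (((k : ℤ) + 1) * ((i : ℤ) + c - a i))‖ := by
  refine summable_norm_zpow_of_le hq hq1 (((k : ℤ) + 1) * (c - a 0)) fun i => ?_
  have hai : (a i : ℤ) ≤ a 0 := by exact_mod_cast ha (Nat.zero_le i)
  nlinarith [Int.natCast_nonneg k, Int.natCast_nonneg i]

lemma norm_mul_zpow_le (hα : Antitone α) (hβ : Antitone β) (hq : q ≠ 0)
    (hq1 : ‖q‖ < 1) (Q : ℂ) (i j : ℕ) :
    ‖Q * q ^ (-(β i : ℤ) - (α j : ℤ) + i + j + 1)‖ ≤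
      ‖Q‖ / ‖q‖ ^ (α 0 + β 0) * ‖q‖ ^ (i + j + 1) := by
  have hq0 : 0 < ‖q‖ := norm_pos_iff.mpr hq
  have he : ((i + j + 1 : ℕ) : ℤ) - (α 0 + β 0 : ℕ) ≤ -(β i : ℤ) - (α j : ℤ) + i + j + 1 := by
    have := hα (Nat.zero_le j)
    have := hβ (Nat.zero_le i)
    push_cast
    omega
  calc ‖Q * q ^ (-(β i : ℤ) - (α j : ℤ) + i + j + 1)‖
      = ‖Q‖ * ‖q‖ ^ (-(β i : ℤ) - (α j : ℤ) + i + j + 1) := by rw [norm_mul, norm_zpow]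
    _ ≤ ‖Q‖ * ‖q‖ ^ (((i + j + 1 : ℕ) : ℤ) - (α 0 + β 0 : ℕ)) :=
        mul_le_mul_of_nonneg_left (zpow_le_zpow_right_of_le_one₀ hq0 hq1.le he) (norm_nonneg Q)
    _ = ‖Q‖ / ‖q‖ ^ (α 0 + β 0) * ‖q‖ ^ (i + j + 1) := by
        rw [zpow_sub₀ hq0.ne', zpow_natCast, zpow_natCast]; ring

lemma mul_zpow_pow_succ_div (hq : q ≠ 0) (Q : ℂ) (i j k : ℕ) :
    (Q * q ^ (-(β i : ℤ) - (α j : ℤ) + i + j + 1)) ^ (k + 1) / ((k : ℂ) + 1) =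
      Q ^ (k + 1) / ((k : ℂ) + 1) * (q ^ (((k : ℤ) + 1) * (((i : ℤ) + 1) - (β i : ℤ))) *
        q ^ (((k : ℤ) + 1) * ((j : ℤ) - (α j : ℤ)))) := by
  rw [← zpow_add₀ hq, mul_pow, ← zpow_natCast (q ^ _), ← zpow_mul, mul_div_right_comm]
  congr 2
  push_cast; ring

end ZpowSeries

theorem closed_topological_vertex_double_product_exp_general
    (q Q : ℂ) (hq0 : 0 < ‖q‖) (hq1 : ‖q‖ < 1)
    (α β : ℕ → ℕ) (hα : Antitone α) (hβ : Antitone β)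
    (hQ : ‖Q‖ < ‖q‖ ^ (α 0 + β 0)) :
    Multipliable (fun ij : ℕ × ℕ =>
      1 - Q * q ^ (-(β ij.1 : ℤ) - (α ij.2 : ℤ) + ij.1 + ij.2 + 1)) ∧
    (∀ k : ℕ, Summable (fun i : ℕ => q ^ (((k : ℤ) + 1) * (((i : ℤ) + 1) - (β i : ℤ))))) ∧
    (∀ k : ℕ, Summable (fun j : ℕ => q ^ (((k : ℤ) + 1) * ((j : ℤ) - (α j : ℤ))))) ∧
    Summable (fun k : ℕ => (Q ^ (k + 1) / ((k : ℂ) + 1)) *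
      (∑' i : ℕ, q ^ (((k : ℤ) + 1) * (((i : ℤ) + 1) - (β i : ℤ)))) *
      (∑' j : ℕ, q ^ (((k : ℤ) + 1) * ((j : ℤ) - (α j : ℤ))))) ∧
    (∏' ij : ℕ × ℕ, (1 - Q * q ^ (-(β ij.1 : ℤ) - (α ij.2 : ℤ) + ij.1 + ij.2 + 1))) =
      Complex.exp (- ∑' k : ℕ, (Q ^ (k + 1) / ((k : ℂ) + 1)) *
        (∑' i : ℕ, q ^ (((k : ℤ) + 1) * (((i : ℤ) + 1) - (β i : ℤ)))) *
        (∑' j : ℕ, q ^ (((k : ℤ) + 1) * ((j : ℤ) - (α j : ℤ))))) := by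
  have hq : q ≠ 0 := norm_pos_iff.mp hq0
  have hA (k : ℕ) := summable_norm_zpow_mul_sub_of_antitone hq hq1 hβ k 1
  have hB (k : ℕ) : Summable fun j : ℕ => ‖q ^ (((k : ℤ) + 1) * ((j : ℤ) - (α j : ℤ)))‖ := by
    simpa using summable_norm_zpow_mul_sub_of_antitone hq hq1 hα k 0
  have hc : ‖Q‖ / ‖q‖ ^ (α 0 + β 0) < 1 := (div_lt_one (by positivity)).mpr hQ
  have hbound (ij : ℕ × ℕ) := norm_mul_zpow_le hα hβ hq hq1 Q ij.1 ij.2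
  obtain ⟨hsum, hprod⟩ := hasProd_one_sub_eq_exp_neg_tsum hc
    (fun ij => (hbound ij).trans
      (mul_le_of_le_one_right (by positivity) (pow_le_one₀ (norm_nonneg _) hq1.le)))
    (.of_nonneg_of_le (fun _ => norm_nonneg _) hbound
      ((summable_pow_add_add_one (norm_nonneg q) hq1).mul_left _))
  have hterm (k : ℕ) :
      ∑' ij : ℕ × ℕ, (Q * q ^ (-(β ij.1 : ℤ) - (α ij.2 : ℤ) + ij.1 + ij.2 + 1)) ^ (k + 1) /
          ((k : ℂ) + 1) =
        Q ^ (k + 1) / ((k : ℂ) + 1) *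
          (∑' i : ℕ, q ^ (((k : ℤ) + 1) * (((i : ℤ) + 1) - (β i : ℤ)))) *
          (∑' j : ℕ, q ^ (((k : ℤ) + 1) * ((j : ℤ) - (α j : ℤ)))) := by
    simp only [mul_zpow_pow_succ_div hq]
    rw [tsum_mul_left, mul_assoc, tsum_mul_tsum_of_summable_norm (hA k) (hB k)]
  refine ⟨hprod.multipliable, fun k => (hA k).of_norm, fun k => (hB k).of_norm,
    hsum.congr hterm, ?_⟩
  rw [hprod.tprod_eq, funext hterm]

/-- Partitions `α, β` are encoded as antitone `ℕ → ℕ` with finite support,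
with `α i = α_{i+1}` (0-based index).  The (1-based) double product
`∏_{i,j≥1} (1 − Q q^{−β_i − α_j + i + j − 1})` becomes, with 0-based indices,
`∏' (i,j) : ℕ × ℕ, (1 − Q q^{−β_i − α_j + i + j + 1})`, and the exponents
`k(i − β_i)` (for `i ≥ 1`) and `k(j − 1 − α_j)` (for `j ≥ 1`) become
`k((i+1) − β_i)` and `k(j − α_j)` for 0-based `i, j` and `k ≥ 1`.

STATEMENT 3: under `0 < |q| < 1` and `|Q| < |q|^{α_1 + β_1}`, the double family
is multipliable, all series on the right-hand side are (absolutely) summable,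
and the product equals
`exp(−∑_{k≥1} (Q^k/k)(∑_{i≥1} q^{k(i−β_i)})(∑_{j≥1} q^{k(j−1−α_j)}))`. -/
theorem closed_topological_vertex_double_product_exp
    (q Q : ℂ) (hq0 : 0 < ‖q‖) (hq1 : ‖q‖ < 1)
    (α β : ℕ → ℕ) (hα : Antitone α) (hβ : Antitone β)
    (hαfin : ∃ N, ∀ i, N ≤ i → α i = 0) (hβfin : ∃ N, ∀ i, N ≤ i → β i = 0)
    (hQ : ‖Q‖ < ‖q‖ ^ (α 0 + β 0)) :
    Multipliable (fun ij : ℕ × ℕ =>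
      1 - Q * q ^ (-(β ij.1 : ℤ) - (α ij.2 : ℤ) + ij.1 + ij.2 + 1)) ∧
    (∀ k : ℕ, Summable (fun i : ℕ => q ^ (((k : ℤ) + 1) * (((i : ℤ) + 1) - (β i : ℤ))))) ∧
    (∀ k : ℕ, Summable (fun j : ℕ => q ^ (((k : ℤ) + 1) * ((j : ℤ) - (α j : ℤ))))) ∧
    Summable (fun k : ℕ => (Q ^ (k + 1) / ((k : ℂ) + 1)) *
      (∑' i : ℕ, q ^ (((k : ℤ) + 1) * (((i : ℤ) + 1) - (β i : ℤ)))) *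
      (∑' j : ℕ, q ^ (((k : ℤ) + 1) * ((j : ℤ) - (α j : ℤ))))) ∧
    (∏' ij : ℕ × ℕ, (1 - Q * q ^ (-(β ij.1 : ℤ) - (α ij.2 : ℤ) + ij.1 + ij.2 + 1))) =
      Complex.exp (- ∑' k : ℕ, (Q ^ (k + 1) / ((k : ℂ) + 1)) *
        (∑' i : ℕ, q ^ (((k : ℤ) + 1) * (((i : ℤ) + 1) - (β i : ℤ)))) *
        (∑' j : ℕ, q ^ (((k : ℤ) + 1) * ((j : ℤ) - (α j : ℤ))))) :=
  closed_topological_vertex_double_product_exp_general q Q hq0 hq1 α β hα hβ hQ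
end

section
/- Let q, p ∈ ℂ with p² = q and 0 < |q| < 1, and let Q1, Q2, Q3 ∈ ℂ. The function Φ(x) := ∏_{i=1}^∞ [(1 − Q1 pq^{i−1}x)(1 − Q1Q2Q3 pq^{i−1}x)] / [(1 − pq^{i−1}x)(1 − Q1Q3 pq^{i−1}x)] is holomorphic in a neighborhood of 0 with Φ(0) = 1, and its Taylor coefficients b_k at 0 satisfy, for every k ≥ 0 (with the convention b_{−1} = b_{−2} = 0), the recursion q^k b_k − Q1(1+Q2Q3) p q^{k−1} b_{k−1} + Q1²Q2Q3 q^{k−1} b_{k−2} = b_k − (1+Q1Q3) p b_{k−1} + Q1Q3 q b_{k−2}. -/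
/-!
With `(y; q)_∞ = qPochhammer q y = ∏ᵢ (1 - y qⁱ)`, `Φ(x)` equals the quotient
`(Q1 p x; q)_∞ (Q1 Q2 Q3 p x; q)_∞ / ((p x; q)_∞ (Q1 Q3 p x; q)_∞)` wherever the denominator
does not vanish, in particular near `0`. Each `(y; q)_∞` is a locally uniform limit of
polynomials in `y`, hence entire, and equals `1` at `y = 0`; so `Φ` is analytic at `0` with
`Φ(0) = 1`. The relation `(y; q)_∞ = (1 - y) (q y; q)_∞` gives the `q`-difference equation
`(1 - p x)(1 - Q1 Q3 p x) Φ(x) = (1 - Q1 p x)(1 - Q1 Q2 Q3 p x) Φ(q x)`; expanding it with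
`p² = q` and comparing the coefficients of `xᵏ` on both sides gives the recursion.
-/

/-- The factor of the infinite product `Φ(x)` indexed by (0-based) `i : ℕ`,
where `p` plays the role of `q^{1/2}`, so `p * q^i = q^{(i+1)−1/2}`. -/
noncomputable def PhiFactor (q p Q1 Q2 Q3 x : ℂ) (i : ℕ) : ℂ :=
  ((1 - Q1 * (p * q ^ i) * x) * (1 - Q1 * Q2 * Q3 * (p * q ^ i) * x)) /
    ((1 - (p * q ^ i) * x) * (1 - Q1 * Q3 * (p * q ^ i) * x))

/-- The Taylor coefficients of a power series extended by `0` to negative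
integer indices (the convention `b_{−1} = b_{−2} = 0`). -/
noncomputable def extendedCoeff (F : FormalMultilinearSeries ℂ ℂ ℂ) (m : ℤ) : ℂ :=
  if 0 ≤ m then F.coeff m.toNat else 0

open Filter Topology Metric FormalMultilinearSeries

section PowerSeries

variable {f : ℂ → ℂ} {F : FormalMultilinearSeries ℂ ℂ ℂ}

lemma extendedCoeff_natCast (n : ℕ) :
    extendedCoeff F n = F.coeff n := by
  simp [extendedCoeff]

lemma extendedCoeff_of_neg {m : ℤ} (hm : m < 0) : extendedCoeff F m = 0 := by
  simp [extendedCoeff, hm.not_ge]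

lemma extendedCoeff_ofScalars_pow_mul (c : ℂ) (m : ℤ) :
    extendedCoeff (ofScalars ℂ fun n => c ^ n * F.coeff n) m = c ^ m * extendedCoeff F m := by
  unfold extendedCoeff
  split_ifs with hm
  · rw [coeff_ofScalars, ← zpow_natCast, Int.toNat_of_nonneg hm]
  · rw [mul_zero]

lemma HasFPowerSeriesAt.hasSum_pow_mul_extendedCoeff_sub (hf : HasFPowerSeriesAt f F 0) :
    ∀ᶠ z in 𝓝 0, ∀ k : ℕ,
      HasSum (fun n : ℕ => z ^ n * extendedCoeff F ((n : ℤ) - k)) (z ^ k * f z) := by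
  filter_upwards [hasFPowerSeriesAt_iff.mp hf] with z hz k
  have hlow : ∑ i ∈ Finset.range k, z ^ i * extendedCoeff F ((i : ℤ) - k) = 0 :=
    Finset.sum_eq_zero fun i hi => by
      rw [extendedCoeff_of_neg (by simp at hi; omega), mul_zero]
  refine (hasSum_nat_add_iff' k).mp ?_
  simpa [hlow, extendedCoeff_natCast, pow_add, mul_assoc, mul_left_comm] using
    (zero_add z ▸ hz).mul_left (z ^ k)

lemma HasFPowerSeriesAt.quadratic_mul (hf : HasFPowerSeriesAt f F 0) (α β : ℂ) :
    HasFPowerSeriesAt (fun z => (1 - α * z + β * z ^ 2) * f z)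
      (ofScalars ℂ fun n : ℕ => extendedCoeff F n - α * extendedCoeff F ((n : ℤ) - 1)
        + β * extendedCoeff F ((n : ℤ) - 2)) 0 := by
  rw [hasFPowerSeriesAt_iff]
  filter_upwards [hf.hasSum_pow_mul_extendedCoeff_sub] with z hz
  convert ((hz 0).sub ((hz 1).mul_left α)).add ((hz 2).mul_left β) using 1
  · ext n
    simp only [coeff_ofScalars, smul_eq_mul, Nat.cast_zero, sub_zero, Nat.cast_one, Nat.cast_ofNat]
    ring
  · rw [zero_add]
    ring

lemma HasFPowerSeriesAt.comp_const_mul (hf : HasFPowerSeriesAt f F 0) (c : ℂ) :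
    HasFPowerSeriesAt (fun z => f (c * z)) (ofScalars ℂ fun n => c ^ n * F.coeff n) 0 := by
  have hc : Tendsto (c * ·) (𝓝 (0 : ℂ)) (𝓝 0) := by
    simpa using (continuous_const_mul c).tendsto 0
  rw [hasFPowerSeriesAt_iff] at hf ⊢
  filter_upwards [hc.eventually hf] with z hz
  convert hz using 1
  · ext n
    simp only [coeff_ofScalars, smul_eq_mul, mul_pow]
    ring
  · simp

theorem HasFPowerSeriesAt.extendedCoeff_recursion (hf : HasFPowerSeriesAt f F 0)
    {α β α' β' c : ℂ}
    (hfe : ∀ᶠ z in 𝓝 0, (1 - α * z + β * z ^ 2) * f z = (1 - α' * z + β' * z ^ 2) * f (c * z))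
    (k : ℕ) :
    extendedCoeff F k - α * extendedCoeff F ((k : ℤ) - 1) + β * extendedCoeff F ((k : ℤ) - 2) =
      c ^ (k : ℤ) * extendedCoeff F k - α' * (c ^ ((k : ℤ) - 1) * extendedCoeff F ((k : ℤ) - 1))
        + β' * (c ^ ((k : ℤ) - 2) * extendedCoeff F ((k : ℤ) - 2)) := by
  have h := (hf.quadratic_mul α β).eq_formalMultilinearSeries_of_eventually
    ((hf.comp_const_mul c).quadratic_mul α' β') hfe
  simpa [coeff_ofScalars, extendedCoeff_ofScalars_pow_mul] using congrArg (coeff · k) h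

end PowerSeries

section QPochhammer

variable {q : ℂ}

noncomputable def qPochhammer (q y : ℂ) : ℂ := ∏' i : ℕ, (1 - y * q ^ i)

lemma hasProdLocallyUniformlyOn_qPochhammer (hq : ‖q‖ < 1) (R : ℝ) :
    HasProdLocallyUniformlyOn (fun i y => 1 - y * q ^ i) (qPochhammer q) (ball 0 R) := by
  simp_rw [sub_eq_add_neg]
  refine Summable.hasProdLocallyUniformlyOn_nat_one_add isOpen_ball
    ((summable_geometric_of_lt_one (norm_nonneg q) hq).mul_left R)
    (.of_forall fun i y hy => ?_) fun i => by fun_prop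
  rw [norm_neg, norm_mul, norm_pow]
  exact mul_le_mul_of_nonneg_right (mem_ball_zero_iff.mp hy).le (by positivity)

lemma hasProd_qPochhammer (hq : ‖q‖ < 1) (y : ℂ) :
    HasProd (fun i => 1 - y * q ^ i) (qPochhammer q y) :=
  (hasProdLocallyUniformlyOn_qPochhammer hq (‖y‖ + 1)).hasProd (by simp)

lemma differentiable_qPochhammer (hq : ‖q‖ < 1) : Differentiable ℂ (qPochhammer q) := fun y =>
  ((hasProdLocallyUniformlyOn_qPochhammer hq (‖y‖ + 1)).differentiableOn
    (.of_forall fun s => by fun_prop) isOpen_ball).differentiableAt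
    (isOpen_ball.mem_nhds (by simp))

@[simp]
lemma qPochhammer_zero_right (q : ℂ) : qPochhammer q 0 = 1 := by
  simp [qPochhammer]

lemma qPochhammer_eq_one_sub_mul (hq : ‖q‖ < 1) (y : ℂ) :
    qPochhammer q y = (1 - y) * qPochhammer q (q * y) := by
  have hshift : (fun i : ℕ => 1 - y * q ^ (i + 1)) = fun i => 1 - q * y * q ^ i := by
    ext i; ring
  rw [qPochhammer, tprod_eq_zero_mul' (hshift ▸ (hasProd_qPochhammer hq (q * y)).multipliable),
    hshift, pow_zero, mul_one, qPochhammer]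

noncomputable def qPochhammerRatio (q a b c d x : ℂ) : ℂ :=
  qPochhammer q (a * x) * qPochhammer q (b * x) / (qPochhammer q (c * x) * qPochhammer q (d * x))

lemma qPochhammerRatio_zero_right {a b c d : ℂ} : qPochhammerRatio q a b c d 0 = 1 := by
  simp [qPochhammerRatio]

lemma analyticAt_qPochhammerRatio (hq : ‖q‖ < 1) (a b c d : ℂ) :
    AnalyticAt ℂ (qPochhammerRatio q a b c d) 0 := by
  have hE : ∀ e : ℂ, AnalyticAt ℂ (fun x => qPochhammer q (e * x)) 0 := fun e =>
    ((differentiable_qPochhammer hq).comp (differentiable_id.const_mul e)).analyticAt 0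
  exact ((hE a).mul (hE b)).div ((hE c).mul (hE d)) (by simp)

lemma eventually_qPochhammer_mul_ne_zero (hq : ‖q‖ < 1) {c d : ℂ} :
    ∀ᶠ x in 𝓝 (0 : ℂ), qPochhammer q (c * x) * qPochhammer q (d * x) ≠ 0 := by
  have hcont : Continuous fun x => qPochhammer q (c * x) * qPochhammer q (d * x) := by
    have := (differentiable_qPochhammer hq).continuous
    fun_prop
  exact hcont.continuousAt.eventually_ne (by simp)

lemma hasProd_qPochhammerRatio (hq : ‖q‖ < 1) {a b c d x : ℂ}
    (hx : qPochhammer q (c * x) * qPochhammer q (d * x) ≠ 0) :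
    HasProd (fun i => (1 - a * x * q ^ i) * (1 - b * x * q ^ i) /
      ((1 - c * x * q ^ i) * (1 - d * x * q ^ i))) (qPochhammerRatio q a b c d x) :=
  ((hasProd_qPochhammer hq _).mul (hasProd_qPochhammer hq _)).div₀
    ((hasProd_qPochhammer hq _).mul (hasProd_qPochhammer hq _)) hx

lemma one_sub_mul_mul_qPochhammerRatio (hq : ‖q‖ < 1) {a b c d x : ℂ} (hc : 1 - c * x ≠ 0)
    (hd : 1 - d * x ≠ 0) :
    (1 - c * x) * (1 - d * x) * qPochhammerRatio q a b c d x =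
      (1 - a * x) * (1 - b * x) * qPochhammerRatio q a b c d (q * x) := by
  have hshift (e : ℂ) : qPochhammer q (e * x) = (1 - e * x) * qPochhammer q (e * (q * x)) := by
    rw [qPochhammer_eq_one_sub_mul hq, mul_left_comm]
  rw [qPochhammerRatio, qPochhammerRatio, hshift a, hshift b, hshift c, hshift d,
    mul_mul_mul_comm (1 - a * x), mul_mul_mul_comm (1 - c * x), mul_div_mul_comm, ← mul_assoc,
    mul_div_cancel₀ _ (mul_ne_zero hc hd)]

lemma eventually_one_sub_mul_mul_qPochhammerRatio (hq : ‖q‖ < 1) (a b c d : ℂ) :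
    ∀ᶠ x in 𝓝 (0 : ℂ), (1 - c * x) * (1 - d * x) * qPochhammerRatio q a b c d x =
      (1 - a * x) * (1 - b * x) * qPochhammerRatio q a b c d (q * x) := by
  have hne (e : ℂ) : ∀ᶠ x in 𝓝 (0 : ℂ), 1 - e * x ≠ 0 :=
    (continuous_const.sub (continuous_const_mul e)).continuousAt.eventually_ne (by simp)
  filter_upwards [hne c, hne d] with x hc hd using one_sub_mul_mul_qPochhammerRatio hq hc hd

lemma tprod_phiFactor_eventuallyEq_qPochhammerRatio (hq : ‖q‖ < 1) (p Q1 Q2 Q3 : ℂ) :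
    (fun x : ℂ => ∏' i : ℕ, PhiFactor q p Q1 Q2 Q3 x i) =ᶠ[𝓝 0]
      qPochhammerRatio q (Q1 * p) (Q1 * Q2 * Q3 * p) p (Q1 * Q3 * p) := by
  filter_upwards [eventually_qPochhammer_mul_ne_zero hq] with x hx
  convert (hasProd_qPochhammerRatio hq hx).tprod_eq using 3 with i
  simp only [PhiFactor]
  ring

end QPochhammer

/-- relation (bk-recursion) of the paper: for `p² = q` and
`0 < |q| < 1`, the function `Φ(x) = ∏_{i≥1} PhiFactor ...` is holomorphic near
`0` (it admits a power series expansion `F` at `0`) with `Φ(0) = 1` (i.e.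
`F.coeff 0 = 1`), and its Taylor coefficients `b_k = F.coeff k` satisfy, for every
`k ≥ 0` (with `b_{−1} = b_{−2} = 0`),
`q^k b_k − Q1(1+Q2Q3) p q^{k−1} b_{k−1} + Q1²Q2Q3 q^{k−1} b_{k−2}
   = b_k − (1+Q1Q3) p b_{k−1} + Q1Q3 q b_{k−2}`. -/
theorem closed_topological_vertex_Phi_coeff_recursion
    (q p Q1 Q2 Q3 : ℂ) (hp : p ^ 2 = q)
    (hq0 : 0 < ‖q‖) (hq1 : ‖q‖ < 1) :
    ∃ F : FormalMultilinearSeries ℂ ℂ ℂ,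
      HasFPowerSeriesAt (fun x : ℂ => ∏' i : ℕ, PhiFactor q p Q1 Q2 Q3 x i) F 0 ∧
      F.coeff 0 = 1 ∧
      ∀ k : ℕ,
        q ^ (k : ℤ) * extendedCoeff F k
            - Q1 * (1 + Q2 * Q3) * p * q ^ ((k : ℤ) - 1) * extendedCoeff F ((k : ℤ) - 1)
            + Q1 ^ 2 * Q2 * Q3 * q ^ ((k : ℤ) - 1) * extendedCoeff F ((k : ℤ) - 2) =
          extendedCoeff F k
            - (1 + Q1 * Q3) * p * extendedCoeff F ((k : ℤ) - 1)
            + Q1 * Q3 * q * extendedCoeff F ((k : ℤ) - 2) := by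
  set R := qPochhammerRatio q (Q1 * p) (Q1 * Q2 * Q3 * p) p (Q1 * Q3 * p)
  obtain ⟨F, hF⟩ := analyticAt_qPochhammerRatio hq1 (Q1 * p) (Q1 * Q2 * Q3 * p) p (Q1 * Q3 * p)
  refine ⟨F, hF.congr (tprod_phiFactor_eventuallyEq_qPochhammerRatio hq1 p Q1 Q2 Q3).symm, ?_,
    fun k => ?_⟩
  · rw [FormalMultilinearSeries.coeff, hF.coeff_zero, qPochhammerRatio_zero_right]
  have hfe : ∀ᶠ z in 𝓝 0, (1 - (1 + Q1 * Q3) * p * z + Q1 * Q3 * q * z ^ 2) * R z =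
      (1 - Q1 * (1 + Q2 * Q3) * p * z + Q1 ^ 2 * Q2 * Q3 * q * z ^ 2) * R (q * z) := by
    filter_upwards [eventually_one_sub_mul_mul_qPochhammerRatio hq1 (Q1 * p) (Q1 * Q2 * Q3 * p) p
      (Q1 * Q3 * p)] with z hz
    linear_combination hz + (Q1 ^ 2 * Q2 * Q3 * R (q * z) - Q1 * Q3 * R z) * z ^ 2 * hp
  have hrec := hF.extendedCoeff_recursion hfe k
  have hpow : q ^ ((k : ℤ) - 1) = q ^ ((k : ℤ) - 2) * q := by
    rw [← zpow_add_one₀ (norm_pos_iff.mp hq0)]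
    ring_nf
  linear_combination -hrec + Q1 ^ 2 * Q2 * Q3 * extendedCoeff F ((k : ℤ) - 2) * hpow
end

section
/- Let q, p ∈ ℂ with q ≠ 0 and p² = q, and let Q1, Q2, Q3 ∈ ℂ with 1 − Q1Q2 q^{1−i} ≠ 0 for every integer i ≥ 1. Suppose (b̃_k)_{k≥0} is a sequence of complex numbers satisfying, for every k ≥ 0 (with b̃_{−1} = b̃_{−2} = 0), the recursion q^k b̃_k + (1+Q1Q3) p q^{k−1} b̃_{k−1} + Q1Q3 q^{k−1} b̃_{k−2} = b̃_k + Q1(1+Q2Q3) p b̃_{k−1} + Q1²Q2Q3 q b̃_{k−2}. Define ã_k := b̃_k · ∏_{i=1}^k (1 − Q1Q2 q^{1−i})^{-1}. Then for every k ≥ 0 (with ã_{−1} = ã_{−2} = 0), (1 − Q1Q2 q^{2−k})(1 − Q1Q2 q^{1−k}) q^{−k} ã_k + Q1(1+Q2Q3) p^{−1} q^{1−k} (1 − Q1Q2 q^{2−k}) ã_{k−1} + Q1²Q2Q3 q^{1−k} ã_{k−2} = (1 − Q1Q2 q^{2−k})(1 − Q1Q2 q^{1−k}) ã_k + (1+Q1Q3)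 p^{−1} (1 − Q1Q2 q^{2−k}) ã_{k−1} + Q1Q3 q^{−1} ã_{k−2}. -/
/-!
With `P_k = ∏_{i<k} (1 - Q1 Q2 q^{-i})` we have `b̃_k = P_k ã_k`, hence `P_k ã_{k-1} = b̃_{k-1} c₁` and
`P_k ã_{k-2} = b̃_{k-2} c₂ c₁` with `c_j = 1 - Q1 Q2 q^{j-k}` (also for small `k`, where the
coefficients with negative index vanish). So `P_k` times the claimed equation at `k` is
`q^{-k} c₂ c₁` times the recursion for `b̃` at `k`, once `p⁻¹ q = p` is used.
-/

open Finset

theorem mul_prod_range_eq_mul_prod_shift {K : Type*} [CommGroupWithZero K] {c : ℤ → K}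
    (hc : ∀ i : ℕ, c i ≠ 0) {a b : ℤ → K} (hb : ∀ m : ℤ, m < 0 → b m = 0)
    (ha : ∀ m : ℤ, a m = b m * ∏ i ∈ range m.toNat, (c i)⁻¹) (n : ℤ) (j : ℕ) :
    a (n - j) * ∏ i ∈ range n.toNat, c i = b (n - j) * ∏ i ∈ range j, c (n - j + i) := by
  rcases lt_or_ge (n - j) 0 with hneg | hnonneg
  · simp [ha, hb _ hneg]
  obtain ⟨m, hm⟩ := Int.eq_ofNat_of_zero_le hnonneg
  have hn : n.toNat = m + j := by omega
  rw [hn, prod_range_add, ha, hm, Int.toNat_natCast, prod_inv_distrib, ← mul_assoc,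
    mul_assoc (b m), inv_mul_cancel₀ (prod_ne_zero_iff.2 fun i _ => hc i), mul_one]
  push_cast
  rfl

theorem qdifference_coeff_of_mul_eq {K : Type*} [Field K]
    {q p A B C D c₁ c₂ P aₖ aₖ₁ aₖ₂ bₖ bₖ₁ bₖ₂ : K} (k : ℤ) (hq : q ≠ 0) (hp : p ^ 2 = q)
    (hP : P ≠ 0)
    (hrec : q ^ k * bₖ + A * p * q ^ (k - 1) * bₖ₁ + B * q ^ (k - 1) * bₖ₂ =
      bₖ + C * p * bₖ₁ + D * q * bₖ₂)
    (h₀ : aₖ * P = bₖ) (h₁ : aₖ₁ * P = bₖ₁ * c₁) (h₂ : aₖ₂ * P = bₖ₂ * (c₂ * c₁)) :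
    c₂ * c₁ * q ^ (-k) * aₖ + C * p⁻¹ * q ^ (1 - k) * c₂ * aₖ₁ + D * q ^ (1 - k) * aₖ₂ =
      c₂ * c₁ * aₖ + A * p⁻¹ * c₂ * aₖ₁ + B * q⁻¹ * aₖ₂ := by
  have hp₀ : p ≠ 0 := by rintro rfl; exact hq (by simp [← hp])
  rw [zpow_sub_one₀ hq] at hrec
  rw [eq_div_of_mul_eq hP h₀, eq_div_of_mul_eq hP h₁, eq_div_of_mul_eq hP h₂, zpow_neg,
    zpow_sub₀ hq, zpow_one]
  field_simp at hrec ⊢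
  linear_combination (-c₂ * c₁ * p) * hrec + c₂ * c₁ * bₖ₁ * (q ^ k * A - q * C) * hp

/-- Theorem 3 of the paper: if `(b̃_k)` satisfies the recursion
coming from the `q`-difference equation for `Φ̃`, and
`ã_k = b̃_k ∏_{i=1}^k (1 − Q1Q2 q^{1−i})⁻¹`, then the `ã_k` satisfy the
coefficient recursion of the `q`-difference equation (tPsi-qd-eq).
Here `p` plays the role of `q^{1/2}` (`p² = q`). -/
theorem closed_topological_vertex_PsiTilde_qdifference
    (q p Q1 Q2 Q3 : ℂ) (hq : q ≠ 0) (hp : p ^ 2 = q)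
    (hQ : ∀ i : ℕ, 1 - Q1 * Q2 * q ^ (-(i : ℤ)) ≠ 0)
    (b : ℤ → ℂ) (hbneg : ∀ m : ℤ, m < 0 → b m = 0)
    (hrec : ∀ k : ℤ, 0 ≤ k →
      q ^ k * b k + (1 + Q1 * Q3) * p * q ^ (k - 1) * b (k - 1)
          + Q1 * Q3 * q ^ (k - 1) * b (k - 2) =
        b k + Q1 * (1 + Q2 * Q3) * p * b (k - 1) + Q1 ^ 2 * Q2 * Q3 * q * b (k - 2))
    (a : ℤ → ℂ)
    (ha : ∀ m : ℤ, a m = b m * ∏ i ∈ Finset.range m.toNat, (1 - Q1 * Q2 * q ^ (-(i : ℤ)))⁻¹) :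
    ∀ k : ℤ, 0 ≤ k →
      (1 - Q1 * Q2 * q ^ (2 - k)) * (1 - Q1 * Q2 * q ^ (1 - k)) * q ^ (-k) * a k
          + Q1 * (1 + Q2 * Q3) * p⁻¹ * q ^ (1 - k) * (1 - Q1 * Q2 * q ^ (2 - k)) * a (k - 1)
          + Q1 ^ 2 * Q2 * Q3 * q ^ (1 - k) * a (k - 2) =
        (1 - Q1 * Q2 * q ^ (2 - k)) * (1 - Q1 * Q2 * q ^ (1 - k)) * a k
          + (1 + Q1 * Q3) * p⁻¹ * (1 - Q1 * Q2 * q ^ (2 - k)) * a (k - 1)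
          + Q1 * Q3 * q⁻¹ * a (k - 2) := by
  intro k hk
  set c : ℤ → ℂ := fun i => 1 - Q1 * Q2 * q ^ (-i)
  have hshift (j : ℕ) := mul_prod_range_eq_mul_prod_shift (c := c) hQ hbneg ha k j
  have hc₁ : c (k - 1) = 1 - Q1 * Q2 * q ^ (1 - k) := by simp only [c, neg_sub]
  have hc₂ : c (k - 2) = 1 - Q1 * Q2 * q ^ (2 - k) := by simp only [c, neg_sub]
  refine qdifference_coeff_of_mul_eq (P := ∏ i ∈ range k.toNat, c i) k hq hp
    (prod_ne_zero_iff.2 fun i _ => hQ i) (hrec k hk) ?_ ?_ ?_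
  · simpa using hshift 0
  · simpa [hc₁] using hshift 1
  · simpa [prod_range_succ, show k - 2 + 1 = k - 1 by ring, hc₁, hc₂] using hshift 2
end

section
/- Let q, p ∈ ℂ with q ≠ 0 and p² = q, and let Q1, Q2, Q3 ∈ ℂ. Then, as linear operators on ℂ[[x]], H = (1 − Q1Q2 q^{-2} S) ∘ K. -/
/-- The substitution operator `S : ℂ[[x]] → ℂ[[x]]`, `(Sf)(x) = f(qx)`, sending
the `k`-th coefficient `c_k` to `q^k c_k`. -/
noncomputable def Sop (q : ℂ) : Module.End ℂ (PowerSeries ℂ) where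
  toFun f := PowerSeries.rescale q f
  map_add' f g := map_add _ f g
  map_smul' c f := by
    ext n
    simp [PowerSeries.coeff_rescale]
    ring

/-- Multiplication by `x` on `ℂ[[x]]`. -/
noncomputable def Mop : Module.End ℂ (PowerSeries ℂ) :=
  LinearMap.mulLeft ℂ (PowerSeries.X : PowerSeries ℂ)

/-- The operator `H(x, q^{x∂x})` of Section 5.2 of the paper. -/
noncomputable def Hop (q p Q1 Q2 Q3 : ℂ) : Module.End ℂ (PowerSeries ℂ) :=
  (1 - (Q1 * Q2 * q ^ (-2 : ℤ)) • Sop q) * (1 - (Q1 * Q2 * q ^ (-1 : ℤ)) • Sop q)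
  - ((1 + Q1 * Q3) * p) • (Mop * (1 - (Q1 * Q2 * q ^ (-1 : ℤ)) • Sop q))
  + (Q1 * Q3 * q) • (Mop * Mop)
  - (1 - (Q1 * Q2 * q ^ (-2 : ℤ)) • Sop q) * (1 - (Q1 * Q2 * q ^ (-1 : ℤ)) • Sop q) * Sop q
  + (Q1 * (1 + Q2 * Q3) * p) • (Mop * (1 - (Q1 * Q2 * q ^ (-1 : ℤ)) • Sop q) * Sop q)
  - (Q1 ^ 2 * Q2 * Q3 * q) • (Mop * Mop * Sop q)

/-- The operator `K(x, q^{x∂x})` of Section 5.2 of the paper. -/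
noncomputable def Kop (q p Q1 Q2 Q3 : ℂ) : Module.End ℂ (PowerSeries ℂ) :=
  (1 - (Q1 * Q2 * q ^ (-1 : ℤ)) • Sop q) * (1 - Sop q)
  - ((1 + Q1 * Q3) * p) • Mop
  + (Q1 * (1 + Q2 * Q3) * p) • (Mop * Sop q)
  + (Q1 * Q3 * q) • (Mop * Mop)

lemma Sop_mul_Mop (q : ℂ) : Sop q * Mop = q • (Mop * Sop q) := by
  ext f n
  simp only [Module.End.mul_apply, LinearMap.smul_apply, Sop, Mop, LinearMap.mulLeft_apply,
    LinearMap.coe_mk, AddHom.coe_mk]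
  rw [PowerSeries.coeff_rescale, map_smul, smul_eq_mul]
  cases n with
  | zero => simp
  | succ m =>
    rw [PowerSeries.coeff_succ_X_mul, PowerSeries.coeff_succ_X_mul, PowerSeries.coeff_rescale]
    simp [pow_succ]
    ring

lemma Sop_mul_Mop_mul (q : ℂ) (X : Module.End ℂ (PowerSeries ℂ)) :
    Sop q * (Mop * X) = q • (Mop * (Sop q * X)) := by
  rw [← mul_assoc, Sop_mul_Mop, smul_mul_assoc, mul_assoc]

/-- the factorization
`H(x, q^{x∂x}) = (1 − Q1Q2 q^{−2} q^{x∂x}) K(x, q^{x∂x})`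
of Section 5.2 of the paper, as linear operators on `ℂ[[x]]`. -/
theorem closed_topological_vertex_H_factorization
    (q p Q1 Q2 Q3 : ℂ) (hq : q ≠ 0) (hp : p ^ 2 = q) :
    Hop q p Q1 Q2 Q3 = (1 - (Q1 * Q2 * q ^ (-2 : ℤ)) • Sop q) * Kop q p Q1 Q2 Q3 := by
  simp only [Hop, Kop, mul_sub, sub_mul, mul_add, add_mul, mul_one, one_mul,
    mul_smul_comm, smul_mul_assoc, mul_assoc, smul_smul, Sop_mul_Mop, Sop_mul_Mop_mul]
  simp only [show (-2:ℤ) = -(2:ℕ) by norm_num, show (-1:ℤ) = -(1:ℕ) by norm_num,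
    zpow_neg, zpow_natCast, pow_one] at *
  match_scalars
  all_goals field_simp
  all_goals ring
end
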